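/- Let A• = (A_n, d_n, δ_n) be a complex in S. If the three-term diagram (d_{n−1}: A_{n−1}→A_n, d_n: A_n→A_{n+1}, δ_n: d_{n−1}∘d_n ⟹ 0) is 2-exact in A_n, then the complex A• is relatively 2-exact in A_n. -/

import Mathlib

/-!
Common framework: relatively exact 2-categories (after Nakaoka,
"Cohomology theory in 2-categories").
-/

open CategoryTheory Bicategory

universe w v u

/-- The tensor unit of a monoidal structure, given explicitly. -/
abbrev munit {H : Type v} [Category.{w} H] (m : MonoidalCategory H) : H :=
  @MonoidalCategoryStruct.tensorUnit H _ m.toMonoidalCategoryStruct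

/-- The tensor product of two objects, for an explicitly given monoidal structure. -/
abbrev mtens {H : Type v} [Category.{w} H] (m : MonoidalCategory H) (x y : H) : H :=
  @MonoidalCategoryStruct.tensorObj H _ m.toMonoidalCategoryStruct x y

section Defs

variable {B : Type u} [Bicategory.{w, v} B]

/-- A 1-cell `f` is faithful if postwhiskering `− ▷ f` is injective on 2-cells. -/
def CFaithful {A C : B} (f : A ⟶ C) : Prop :=
  ∀ ⦃X : B⦄ ⦃g h : X ⟶ A⦄ (η θ : g ⟶ h), η ▷ f = θ ▷ f → η = θ

/-- A 1-cell `f` is fully faithful if `− ∘ f` is a fully faithful functor on hom-categories. -/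
def CFullyFaithful {A C : B} (f : A ⟶ C) : Prop :=
  CFaithful f ∧ ∀ ⦃X : B⦄ (g h : X ⟶ A) (μ : g ≫ f ⟶ h ≫ f), ∃ η : g ⟶ h, η ▷ f = μ

/-- A 1-cell `f` is cofaithful if prewhiskering `f ◁ −` is injective on 2-cells. -/
def CCofaithful {A C : B} (f : A ⟶ C) : Prop :=
  ∀ ⦃X : B⦄ ⦃g h : C ⟶ X⦄ (η θ : g ⟶ h), f ◁ η = f ◁ θ → η = θ

/-- A 1-cell `f` is fully cofaithful if `f ∘ −` is a fully faithful functor on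
hom-categories. -/
def CFullyCofaithful {A C : B} (f : A ⟶ C) : Prop :=
  CCofaithful f ∧ ∀ ⦃X : B⦄ (g h : C ⟶ X) (μ : f ≫ g ⟶ f ≫ h), ∃ η : g ⟶ h, f ◁ η = μ

/-- A 1-cell is an equivalence if it has a quasi-inverse up to invertible 2-cells. -/
def Is2Equiv {A C : B} (f : A ⟶ C) : Prop :=
  ∃ g : C ⟶ A, Nonempty (f ≫ g ≅ 𝟙 A) ∧ Nonempty (g ≫ f ≅ 𝟙 C)

/-- 2-universal product of two 0-cells. -/
def IsProduct2 (A₁ A₂ P : B) (p₁ : P ⟶ A₁) (p₂ : P ⟶ A₂) : Prop :=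
  (∀ (X : B) (q₁ : X ⟶ A₁) (q₂ : X ⟶ A₂),
    ∃ (q : X ⟶ P) (_ : q ≫ p₁ ⟶ q₁) (_ : q ≫ p₂ ⟶ q₂), True)
  ∧ (∀ (X : B) (q₁ : X ⟶ A₁) (q₂ : X ⟶ A₂) (r r' : X ⟶ P)
      (ξ₁ : r ≫ p₁ ⟶ q₁) (ξ₂ : r ≫ p₂ ⟶ q₂) (ξ₁' : r' ≫ p₁ ⟶ q₁) (ξ₂' : r' ≫ p₂ ⟶ q₂),
      ∃! η : r ⟶ r', ((η ▷ p₁) ≫ ξ₁' = ξ₁) ∧ ((η ▷ p₂) ≫ ξ₂' = ξ₂))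

/-- 2-universal coproduct of two 0-cells. -/
def IsCoproduct2 (A₁ A₂ P : B) (i₁ : A₁ ⟶ P) (i₂ : A₂ ⟶ P) : Prop :=
  (∀ (X : B) (q₁ : A₁ ⟶ X) (q₂ : A₂ ⟶ X),
    ∃ (q : P ⟶ X) (_ : i₁ ≫ q ⟶ q₁) (_ : i₂ ≫ q ⟶ q₂), True)
  ∧ (∀ (X : B) (q₁ : A₁ ⟶ X) (q₂ : A₂ ⟶ X) (r r' : P ⟶ X)
      (ξ₁ : i₁ ≫ r ⟶ q₁) (ξ₂ : i₂ ≫ r ⟶ q₂) (ξ₁' : i₁ ≫ r' ⟶ q₁) (ξ₂' : i₂ ≫ r' ⟶ q₂),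
      ∃! η : r ⟶ r', ((i₁ ◁ η) ≫ ξ₁' = ξ₁) ∧ ((i₂ ◁ η) ≫ ξ₂' = ξ₂))

/-- 2-universal difference kernel of a parallel pair of 1-cells. -/
def IsDiffKernel {A C : B} (g h : A ⟶ C) (D : B) (d : D ⟶ A) (φ : d ≫ g ⟶ d ≫ h) : Prop :=
  (∀ (X : B) (e : X ⟶ A) (ψ : e ≫ g ⟶ e ≫ h),
    ∃ (e' : X ⟶ D) (ε' : e' ≫ d ⟶ e),
      (α_ e' d g).hom ≫ (e' ◁ φ) ≫ (α_ e' d h).inv ≫ (ε' ▷ h) = (ε' ▷ g) ≫ ψ)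
  ∧ (∀ (X : B) (e : X ⟶ A) (ψ : e ≫ g ⟶ e ≫ h)
      (e₁ e₂ : X ⟶ D) (ε₁ : e₁ ≫ d ⟶ e) (ε₂ : e₂ ≫ d ⟶ e),
      ((α_ e₁ d g).hom ≫ (e₁ ◁ φ) ≫ (α_ e₁ d h).inv ≫ (ε₁ ▷ h) = (ε₁ ▷ g) ≫ ψ) →
      ((α_ e₂ d g).hom ≫ (e₂ ◁ φ) ≫ (α_ e₂ d h).inv ≫ (ε₂ ▷ h) = (ε₂ ▷ g) ≫ ψ) →
      ∃! η : e₁ ⟶ e₂, (η ▷ d) ≫ ε₂ = ε₁)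

/-- 2-universal pullback of a cospan of 1-cells. -/
def IsPullback2 {A₁ A₂ C : B} (f₁ : A₁ ⟶ C) (f₂ : A₂ ⟶ C) (P : B)
    (p₁ : P ⟶ A₂) (p₂ : P ⟶ A₁) (ξ : p₁ ≫ f₂ ⟶ p₂ ≫ f₁) : Prop :=
  (∀ (X : B) (g₁ : X ⟶ A₂) (g₂ : X ⟶ A₁) (η : g₁ ≫ f₂ ⟶ g₂ ≫ f₁),
    ∃ (g : X ⟶ P) (ξ₁ : g ≫ p₁ ⟶ g₁) (ξ₂ : g ≫ p₂ ⟶ g₂),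
      (ξ₁ ▷ f₂) ≫ η = (α_ g p₁ f₂).hom ≫ (g ◁ ξ) ≫ (α_ g p₂ f₁).inv ≫ (ξ₂ ▷ f₁))
  ∧ (∀ (X : B) (g₁ : X ⟶ A₂) (g₂ : X ⟶ A₁) (η : g₁ ≫ f₂ ⟶ g₂ ≫ f₁)
      (g g' : X ⟶ P) (ξ₁ : g ≫ p₁ ⟶ g₁) (ξ₂ : g ≫ p₂ ⟶ g₂)
      (ξ₁' : g' ≫ p₁ ⟶ g₁) (ξ₂' : g' ≫ p₂ ⟶ g₂),
      ((ξ₁ ▷ f₂) ≫ η = (α_ g p₁ f₂).hom ≫ (g ◁ ξ) ≫ (α_ g p₂ f₁).inv ≫ (ξ₂ ▷ f₁)) →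
      ((ξ₁' ▷ f₂) ≫ η = (α_ g' p₁ f₂).hom ≫ (g' ◁ ξ) ≫ (α_ g' p₂ f₁).inv ≫ (ξ₂' ▷ f₁)) →
      ∃! ζ : g ⟶ g', ((ζ ▷ p₁) ≫ ξ₁' = ξ₁) ∧ ((ζ ▷ p₂) ≫ ξ₂' = ξ₂))

end Defs

/-- A locally SCG 2-category: each hom-category is a symmetric categorical group,
`Hom` is a 2-functor into SCG (expressed through the zero 1-cells, the unit
constraints `sharp`/`flat` of the monoidal functors `f ∘ −`, `− ∘ f` and their
coherence), there is a zero object, and binary (co)products exist. -/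
structure LocSCG (B : Type u) [Bicategory.{w, v} B] where
  /-- symmetric monoidal structure on each hom-category -/
  monStr : ∀ A C : B, MonoidalCategory (A ⟶ C)
  symm : ∀ A C : B, @SymmetricCategory (A ⟶ C) _ (monStr A C)
  /-- every 2-cell is invertible -/
  cellIso : ∀ {A C : B} {f g : A ⟶ C} (η : f ⟶ g), IsIso η
  /-- every 1-cell is ⊗-invertible up to an isomorphism -/
  objInv : ∀ {A C : B} (f : A ⟶ C),
    ∃ g : A ⟶ C, Nonempty (mtens (monStr A C) f g ≅ munit (monStr A C))
  /-- zero 1-cells compose to zero 1-cells -/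
  zero_comp : ∀ A C E : B, munit (monStr A C) ≫ munit (monStr C E) = munit (monStr A E)
  /-- unit constraint `f_I^♯ : f ∘ 0 ⟶ 0` of the monoidal functor `f ∘ −` -/
  sharp : ∀ {A C E : B} (f : A ⟶ C), f ≫ munit (monStr C E) ≅ munit (monStr A E)
  /-- unit constraint `f_I^♭ : 0 ∘ f ⟶ 0` of the monoidal functor `− ∘ f` -/
  flat : ∀ {A C E : B} (f : C ⟶ E), munit (monStr A C) ≫ f ≅ munit (monStr A E)
  sharp_natural : ∀ {A C E : B} {f g : A ⟶ C} (η : f ⟶ g),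
    (η ▷ munit (monStr C E)) ≫ (sharp g).hom = (sharp f).hom
  flat_natural : ∀ {A C E : B} {f g : C ⟶ E} (η : f ⟶ g),
    (munit (monStr A C) ◁ η) ≫ (flat g).hom = (flat f).hom
  /-- unit constraints of zero 1-cells are identities -/
  sharp_zero : ∀ A C E : B,
    (sharp (E := E) (munit (monStr A C))).hom = eqToHom (zero_comp A C E)
  flat_zero : ∀ A C E : B,
    (flat (A := A) (munit (monStr C E))).hom = eqToHom (zero_comp A C E)
  sharp_comp : ∀ {A C E G : B} (f : A ⟶ C) (g : C ⟶ E),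
    (sharp (E := G) (f ≫ g)).hom
      = (α_ f g (munit (monStr E G))).hom ≫ (f ◁ (sharp g).hom) ≫ (sharp f).hom
  flat_comp : ∀ {X A C E : B} (f : A ⟶ C) (g : C ⟶ E),
    (flat (A := X) (f ≫ g)).hom
      = (α_ (munit (monStr X A)) f g).inv ≫ ((flat f).hom ▷ g) ≫ (flat g).hom
  sharp_flat : ∀ {A C E G : B} (f : A ⟶ C) (g : E ⟶ G),
    ((sharp f).hom ▷ g) ≫ (flat g).hom
      = (α_ f (munit (monStr C E)) g).hom ≫ (f ◁ (flat g).hom) ≫ (sharp f).hom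
  /-- tensor constraint of the monoidal functor `k ∘ −` -/
  sharpTensor : ∀ {X A C : B} (k : X ⟶ A) (g h : A ⟶ C),
    k ≫ mtens (monStr A C) g h ≅ mtens (monStr X C) (k ≫ g) (k ≫ h)
  /-- tensor constraint of the monoidal functor `− ∘ k` -/
  flatTensor : ∀ {A C E : B} (k : C ⟶ E) (g h : A ⟶ C),
    mtens (monStr A C) g h ≫ k ≅ mtens (monStr A E) (g ≫ k) (h ≫ k)
  /-- the zero object -/
  zObj : B
  homZZ : ∀ f : zObj ⟶ zObj, f = munit (monStr zObj zObj)
  cellZZ : ∀ (f g : zObj ⟶ zObj) (η θ : f ⟶ g), η = θ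
  toZero : ∀ {A : B} (f : A ⟶ zObj), f ⟶ munit (monStr A zObj)
  toZero_unique : ∀ {A : B} (f : A ⟶ zObj) (η θ : f ⟶ munit (monStr A zObj)), η = θ
  fromZero : ∀ {A : B} (f : zObj ⟶ A), f ⟶ munit (monStr zObj A)
  fromZero_unique : ∀ {A : B} (f : zObj ⟶ A) (η θ : f ⟶ munit (monStr zObj A)), η = θ
  hasProd : ∀ A₁ A₂ : B, ∃ (P : B) (p₁ : P ⟶ A₁) (p₂ : P ⟶ A₂), IsProduct2 A₁ A₂ P p₁ p₂
  hasCoprod : ∀ A₁ A₂ : B, ∃ (P : B) (i₁ : A₁ ⟶ P) (i₂ : A₂ ⟶ P), IsCoproduct2 A₁ A₂ P i₁ i₂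

namespace LocSCG

variable {B : Type u} [Bicategory.{w, v} B]

/-- the zero 1-cell `0_{A,C}`. -/
def zro (S : LocSCG B) (A C : B) : A ⟶ C := munit (S.monStr A C)

/-- tensor product of parallel 1-cells in a hom-category. -/
def tens (S : LocSCG B) {A C : B} (f g : A ⟶ C) : A ⟶ C := mtens (S.monStr A C) f g

/-- tensor product of 2-cells in a hom-category. -/
def tensHom (S : LocSCG B) {A C : B} {f₁ g₁ f₂ g₂ : A ⟶ C} (η : f₁ ⟶ g₁) (θ : f₂ ⟶ g₂) :
    S.tens f₁ f₂ ⟶ S.tens g₁ g₂ :=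
  @MonoidalCategoryStruct.tensorHom _ _ (S.monStr A C).toMonoidalCategoryStruct _ _ _ _ η θ

/-- associator of the hom-category monoidal structure. -/
def tassoc (S : LocSCG B) {A C : B} (f g h : A ⟶ C) :
    S.tens (S.tens f g) h ≅ S.tens f (S.tens g h) :=
  @MonoidalCategoryStruct.associator _ _ (S.monStr A C).toMonoidalCategoryStruct f g h

/-- left unitor of the hom-category monoidal structure. -/
def tlunit (S : LocSCG B) {A C : B} (f : A ⟶ C) : S.tens (S.zro A C) f ≅ f :=
  @MonoidalCategoryStruct.leftUnitor _ _ (S.monStr A C).toMonoidalCategoryStruct f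

/-- right unitor of the hom-category monoidal structure. -/
def trunit (S : LocSCG B) {A C : B} (f : A ⟶ C) : S.tens f (S.zro A C) ≅ f :=
  @MonoidalCategoryStruct.rightUnitor _ _ (S.monStr A C).toMonoidalCategoryStruct f

/-- inverse of a 2-cell. -/
noncomputable def inv2 (S : LocSCG B) {A C : B} {f g : A ⟶ C} (η : f ⟶ g) : g ⟶ f :=
  @CategoryTheory.inv _ _ _ _ η (S.cellIso η)

variable (S : LocSCG B)

/-- `(K, k, ε)` is a (2-universal) kernel of `f`. -/
def IsKernel {A C : B} (f : A ⟶ C) (K : B) (k : K ⟶ A) (εk : k ≫ f ⟶ S.zro K C) : Prop :=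
  (∀ (X : B) (x : X ⟶ A) (e : x ≫ f ⟶ S.zro X C),
    ∃ (x' : X ⟶ K) (e' : x' ≫ k ⟶ x),
      (e' ▷ f) ≫ e = (α_ x' k f).hom ≫ (x' ◁ εk) ≫ (S.sharp x').hom)
  ∧ (∀ (X : B) (x : X ⟶ A) (e : x ≫ f ⟶ S.zro X C)
      (x₁ x₂ : X ⟶ K) (e₁ : x₁ ≫ k ⟶ x) (e₂ : x₂ ≫ k ⟶ x),
      ((e₁ ▷ f) ≫ e = (α_ x₁ k f).hom ≫ (x₁ ◁ εk) ≫ (S.sharp x₁).hom) →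
      ((e₂ ▷ f) ≫ e = (α_ x₂ k f).hom ≫ (x₂ ◁ εk) ≫ (S.sharp x₂).hom) →
      ∃! η : x₁ ⟶ x₂, (η ▷ k) ≫ e₂ = e₁)

/-- `(Q, c, π)` is a (2-universal) cokernel of `f`. -/
def IsCokernel {A C : B} (f : A ⟶ C) (Q : B) (c : C ⟶ Q) (π : f ≫ c ⟶ S.zro A Q) : Prop :=
  (∀ (X : B) (x : C ⟶ X) (e : f ≫ x ⟶ S.zro A X),
    ∃ (x' : Q ⟶ X) (e' : c ≫ x' ⟶ x),
      (f ◁ e') ≫ e = (α_ f c x').inv ≫ (π ▷ x') ≫ (S.flat x').hom)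
  ∧ (∀ (X : B) (x : C ⟶ X) (e : f ≫ x ⟶ S.zro A X)
      (x₁ x₂ : Q ⟶ X) (e₁ : c ≫ x₁ ⟶ x) (e₂ : c ≫ x₂ ⟶ x),
      ((f ◁ e₁) ≫ e = (α_ f c x₁).inv ≫ (π ▷ x₁) ≫ (S.flat x₁).hom) →
      ((f ◁ e₂) ≫ e = (α_ f c x₂).inv ≫ (π ▷ x₂) ≫ (S.flat x₂).hom) →
      ∃! η : x₁ ⟶ x₂, (c ◁ η) ≫ e₂ = e₁)

/-- compatibility of a candidate `(x, e)` with `φ` (relative kernel condition). -/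
def RelKerCompat {X A C E : B} (f : A ⟶ C) (g : C ⟶ E) (φ : f ≫ g ⟶ S.zro A E)
    (x : X ⟶ A) (e : x ≫ f ⟶ S.zro X C) : Prop :=
  (α_ x f g).hom ≫ (x ◁ φ) ≫ (S.sharp x).hom = (e ▷ g) ≫ (S.flat g).hom

/-- `(K, k, ε)` is a (2-universal) relative kernel `Ker(f, φ)` of `f : A ⟶ C`
relative to `g : C ⟶ E`, `φ : f ∘ g ⟶ 0`. -/
def IsRelKernel {A C E : B} (f : A ⟶ C) (g : C ⟶ E) (φ : f ≫ g ⟶ S.zro A E)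
    (K : B) (k : K ⟶ A) (εk : k ≫ f ⟶ S.zro K C) : Prop :=
  S.RelKerCompat f g φ k εk
  ∧ (∀ (X : B) (x : X ⟶ A) (e : x ≫ f ⟶ S.zro X C), S.RelKerCompat f g φ x e →
      ∃ (x' : X ⟶ K) (e' : x' ≫ k ⟶ x),
        (e' ▷ f) ≫ e = (α_ x' k f).hom ≫ (x' ◁ εk) ≫ (S.sharp x').hom)
  ∧ (∀ (X : B) (x : X ⟶ A) (e : x ≫ f ⟶ S.zro X C), S.RelKerCompat f g φ x e →
      ∀ (x₁ x₂ : X ⟶ K) (e₁ : x₁ ≫ k ⟶ x) (e₂ : x₂ ≫ k ⟶ x),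
        ((e₁ ▷ f) ≫ e = (α_ x₁ k f).hom ≫ (x₁ ◁ εk) ≫ (S.sharp x₁).hom) →
        ((e₂ ▷ f) ≫ e = (α_ x₂ k f).hom ≫ (x₂ ◁ εk) ≫ (S.sharp x₂).hom) →
        ∃! η : x₁ ⟶ x₂, (η ▷ k) ≫ e₂ = e₁)

/-- compatibility of a candidate `(x, e)` with `φ` (relative cokernel condition). -/
def RelCokCompat {A C E X : B} (f : A ⟶ C) (g : C ⟶ E) (φ : f ≫ g ⟶ S.zro A E)
    (x : E ⟶ X) (e : g ≫ x ⟶ S.zro C X) : Prop :=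
  (φ ▷ x) ≫ (S.flat x).hom = (α_ f g x).hom ≫ (f ◁ e) ≫ (S.sharp f).hom

/-- `(Q, c, π)` is a (2-universal) relative cokernel `Cok(g, φ)` of `g : C ⟶ E`
relative to `f : A ⟶ C`, `φ : f ∘ g ⟶ 0`. -/
def IsRelCokernel {A C E : B} (f : A ⟶ C) (g : C ⟶ E) (φ : f ≫ g ⟶ S.zro A E)
    (Q : B) (c : E ⟶ Q) (π : g ≫ c ⟶ S.zro C Q) : Prop :=
  S.RelCokCompat f g φ c π
  ∧ (∀ (X : B) (x : E ⟶ X) (e : g ≫ x ⟶ S.zro C X), S.RelCokCompat f g φ x e →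
      ∃ (x' : Q ⟶ X) (e' : c ≫ x' ⟶ x),
        (g ◁ e') ≫ e = (α_ g c x').inv ≫ (π ▷ x') ≫ (S.flat x').hom)
  ∧ (∀ (X : B) (x : E ⟶ X) (e : g ≫ x ⟶ S.zro C X), S.RelCokCompat f g φ x e →
      ∀ (x₁ x₂ : Q ⟶ X) (e₁ : c ≫ x₁ ⟶ x) (e₂ : c ≫ x₂ ⟶ x),
        ((g ◁ e₁) ≫ e = (α_ g c x₁).inv ≫ (π ▷ x₁) ≫ (S.flat x₁).hom) →
        ((g ◁ e₂) ≫ e = (α_ g c x₂).inv ≫ (π ▷ x₂) ≫ (S.flat x₂).hom) →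
        ∃! η : x₁ ⟶ x₂, (c ◁ η) ≫ e₂ = e₁)

/-- a 0-cell is zero if it is equivalent to the zero object. -/
def ZeroEq (X : B) : Prop := ∃ e : X ⟶ S.zObj, Is2Equiv e

/-- 2-exactness of `(f, g, φ)` in the middle 0-cell: the cokernel of the induced
factorization of `f` through any kernel of `g` is zero. -/
def TwoExact {A C E : B} (f : A ⟶ C) (g : C ⟶ E) (φ : f ≫ g ⟶ S.zro A E) : Prop :=
  ∀ (K : B) (k : K ⟶ C) (εk : k ≫ g ⟶ S.zro K E), S.IsKernel g K k εk →
  ∀ (fb : A ⟶ K) (φb : fb ≫ k ⟶ f),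
    ((φb ▷ g) ≫ φ = (α_ fb k g).hom ≫ (fb ◁ εk) ≫ (S.sharp fb).hom) →
    S.IsCokernel fb S.zObj (S.zro K S.zObj) (S.sharp fb).hom

/-- relative 2-exactness at the middle 0-cell `A₂` of a 5-term window
`A₀ → A₁ → A₂ → A₃ → A₄` of a complex: the relative cohomology
`H = Cok(k, ν₂)` is equivalent to the zero object. -/
def RelTwoExactWindow {A₀ A₁ A₂ A₃ A₄ : B}
    (d₀ : A₀ ⟶ A₁) (d₁ : A₁ ⟶ A₂) (d₂ : A₂ ⟶ A₃) (d₃ : A₃ ⟶ A₄)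
    (δ₁ : d₀ ≫ d₁ ⟶ S.zro A₀ A₂) (δ₂ : d₁ ≫ d₂ ⟶ S.zro A₁ A₃)
    (δ₃ : d₂ ≫ d₃ ⟶ S.zro A₂ A₄) : Prop :=
  ∀ (Z : B) (z : Z ⟶ A₂) (ζ : z ≫ d₂ ⟶ S.zro Z A₃),
    S.IsRelKernel d₂ d₃ δ₃ Z z ζ →
  ∀ (k : A₁ ⟶ Z) (ν₁ : k ≫ z ⟶ d₁) (ν₂ : d₀ ≫ k ⟶ S.zro A₀ Z),
    ((ν₁ ▷ d₂) ≫ δ₂ = (α_ k z d₂).hom ≫ (k ◁ ζ) ≫ (S.sharp k).hom) →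
    ((α_ d₀ k z).hom ≫ (d₀ ◁ ν₁) ≫ δ₁ = (ν₂ ▷ z) ≫ (S.flat z).hom) →
  ∀ (H : B) (c : Z ⟶ H) (π : k ≫ c ⟶ S.zro A₁ H),
    S.IsRelCokernel d₀ k ν₂ H c π → S.ZeroEq H

end LocSCG

/-- The remaining axioms of a relatively exact 2-category: existence of kernels and
cokernels, and the characterization of (co)faithful 1-cells. -/
structure IsRelExact {B : Type u} [Bicategory.{w, v} B] (S : LocSCG B) : Prop where
  hasKer : ∀ {A C : B} (f : A ⟶ C),
    ∃ (K : B) (k : K ⟶ A) (εk : k ≫ f ⟶ S.zro K C), S.IsKernel f K k εk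
  hasCok : ∀ {A C : B} (f : A ⟶ C),
    ∃ (Q : B) (c : C ⟶ Q) (π : f ≫ c ⟶ S.zro A Q), S.IsCokernel f Q c π
  faithful_iff : ∀ {A C : B} (f : A ⟶ C) (Q : B) (c : C ⟶ Q) (π : f ≫ c ⟶ S.zro A Q),
    S.IsCokernel f Q c π → (CFaithful f ↔ S.IsKernel c A f π)
  cofaithful_iff : ∀ {A C : B} (f : A ⟶ C) (K : B) (k : K ⟶ A) (εk : k ≫ f ⟶ S.zro K C),
    S.IsKernel f K k εk → (CCofaithful f ↔ S.IsCokernel k C f εk)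

/-- A (cochain) complex in a locally SCG 2-category. -/
structure Cpx {B : Type u} [Bicategory.{w, v} B] (S : LocSCG B) where
  X : ℤ → B
  d : ∀ n : ℤ, X n ⟶ X (n + 1)
  δ : ∀ n : ℤ, d n ≫ d (n + 1) ⟶ S.zro (X n) (X (n + 1 + 1))
  compat : ∀ n : ℤ,
    (α_ (d n) (d (n + 1)) (d (n + 1 + 1))).hom ≫ (d n ◁ δ (n + 1)) ≫ (S.sharp (d n)).hom
      = (δ n ▷ d (n + 1 + 1)) ≫ (S.flat (d (n + 1 + 1))).hom

/-- A morphism of complexes. -/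
structure CpxMor {B : Type u} [Bicategory.{w, v} B] (S : LocSCG B) (A₁ A₂ : Cpx S) where
  f : ∀ n : ℤ, A₁.X n ⟶ A₂.X n
  lam : ∀ n : ℤ, A₁.d n ≫ f (n + 1) ⟶ f n ≫ A₂.d n
  compat : ∀ n : ℤ,
    (A₁.δ n ▷ f (n + 1 + 1)) ≫ (S.flat (f (n + 1 + 1))).hom
      = (α_ (A₁.d n) (A₁.d (n + 1)) (f (n + 1 + 1))).hom ≫ (A₁.d n ◁ lam (n + 1))
          ≫ (α_ (A₁.d n) (f (n + 1)) (A₂.d (n + 1))).inv ≫ (lam n ▷ A₂.d (n + 1))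
          ≫ (α_ (f n) (A₂.d n) (A₂.d (n + 1))).hom ≫ (f n ◁ A₂.δ n) ≫ (S.sharp (f n)).hom

/-- An extension of complexes: degreewise an extension, with compatible 2-cells. -/
def IsCpxExtension {B : Type u} [Bicategory.{w, v} B] (S : LocSCG B) {A₁ A₂ A₃ : Cpx S}
    (F : CpxMor S A₁ A₂) (G : CpxMor S A₂ A₃)
    (φ : ∀ n : ℤ, F.f n ≫ G.f n ⟶ S.zro (A₁.X n) (A₃.X n)) : Prop :=
  (∀ n : ℤ, S.IsKernel (G.f n) (A₁.X n) (F.f n) (φ n)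
      ∧ S.IsCokernel (F.f n) (A₃.X n) (G.f n) (φ n))
  ∧ (∀ n : ℤ,
      (F.lam n ▷ G.f (n + 1)) ≫ (α_ (F.f n) (A₂.d n) (G.f (n + 1))).hom
          ≫ (F.f n ◁ G.lam n) ≫ (α_ (F.f n) (G.f n) (A₃.d n)).inv
          ≫ (φ n ▷ A₃.d n) ≫ (S.flat (A₃.d n)).hom
        = (α_ (A₁.d n) (F.f (n + 1)) (G.f (n + 1))).hom ≫ (A₁.d n ◁ φ (n + 1))
            ≫ (S.sharp (A₁.d n)).hom)

/-- A witness for the (relative) cohomology `H = Cok(k, ν₂)` of a complex at the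
0-cell `X (m + 2)`. -/
structure HWitness {B : Type u} [Bicategory.{w, v} B] (S : LocSCG B) (A : Cpx S) (m : ℤ) where
  Z : B
  z : Z ⟶ A.X (m + 1 + 1)
  ζ : z ≫ A.d (m + 1 + 1) ⟶ S.zro Z (A.X (m + 1 + 1 + 1))
  isZ : S.IsRelKernel (A.d (m + 1 + 1)) (A.d (m + 1 + 1 + 1)) (A.δ (m + 1 + 1)) Z z ζ
  k : A.X (m + 1) ⟶ Z
  ν₁ : k ≫ z ⟶ A.d (m + 1)
  ν₂ : A.d m ≫ k ⟶ S.zro (A.X m) Z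
  hν₁ : (ν₁ ▷ A.d (m + 1 + 1)) ≫ A.δ (m + 1)
      = (α_ k z (A.d (m + 1 + 1))).hom ≫ (k ◁ ζ) ≫ (S.sharp k).hom
  hν₂ : (α_ (A.d m) k z).hom ≫ (A.d m ◁ ν₁) ≫ A.δ m = (ν₂ ▷ z) ≫ (S.flat z).hom
  H : B
  c : Z ⟶ H
  π : k ≫ c ⟶ S.zro (A.X (m + 1)) H
  isH : S.IsRelCokernel (A.d m) k ν₂ H c π

/-!
Write `Z = Ker(d₂, δ₃)` with projection `z`, `K = Ker d₂`, and `w : Z ⟶ K` for the comparison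
1-cell. Then `k ≫ w` is the factorization of `d₁` through `K`, so by 2-exactness its cokernel
vanishes. The projection of a relative kernel is faithful, hence so is `w`; being the kernel of
its own cokernel, which is killed by `k ≫ w` and therefore zero, `w` has a section `u`, and the
relative kernel property of `Z` makes `u` a quasi-inverse of `w`. So `Cok k` vanishes as well.
Finally, if `Cok k ≃ 0` then `c ≅ 0` compatibly with `π`, so `𝟙 H` and `0` both factor `c`
through the relative cokernel `H = Cok(k, ν₂)`, whence `𝟙 H ≅ 0` and `H ≃ 0`.
-/

lemma CFaithful.of_comp {B : Type u} [Bicategory.{w, v} B] {X Y Z : B} {w : X ⟶ Y} {k : Y ⟶ Z}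
    (h : CFaithful (w ≫ k)) : CFaithful w := by
  intro T x₁ x₂ η θ hηθ
  apply h
  simp only [whiskerRight_comp, hηθ]

namespace LocSCG

variable {B : Type u} [Bicategory.{w, v} B] (S : LocSCG B)

lemma comp_inv2 {A C : B} {f g : A ⟶ C} (η : f ⟶ g) : η ≫ S.inv2 η = 𝟙 f :=
  @IsIso.hom_inv_id _ _ _ _ η (S.cellIso η)

lemma inv2_comp {A C : B} {f g : A ⟶ C} (η : f ⟶ g) : S.inv2 η ≫ η = 𝟙 g :=
  @IsIso.inv_hom_id _ _ _ _ η (S.cellIso η)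

lemma comp_inv2_assoc {A C : B} {f g h : A ⟶ C} (η : f ⟶ g) (θ : f ⟶ h) :
    η ≫ S.inv2 η ≫ θ = θ := by
  rw [← Category.assoc, comp_inv2, Category.id_comp]

lemma cFaithful_of_twoCell (S : LocSCG B) {X Y : B} {y z : X ⟶ Y} (ω : y ⟶ z)
    (hz : CFaithful z) : CFaithful y := by
  intro T x₁ x₂ η θ hηθ
  apply hz
  have := S.cellIso (x₁ ◁ ω)
  rw [← cancel_epi (x₁ ◁ ω), whisker_exchange, whisker_exchange, hηθ]

lemma sharp_id {X E : B} : (S.sharp (E := E) (𝟙 X)).hom = (λ_ _).hom := by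
  have h := S.sharp_natural (E := E) (λ_ (𝟙 X)).hom
  rw [S.sharp_comp, ← Category.assoc, cancel_mono, id_whiskerLeft,
    leftUnitor_whiskerRight, cancel_epi] at h
  exact (Iso.comp_inv_eq_id _).mp ((cancel_epi _).mp (h.symm.trans (Category.comp_id _).symm))

lemma flat_id {A X : B} : (S.flat (A := A) (𝟙 X)).hom = (ρ_ _).hom := by
  have h := S.flat_natural (A := A) (ρ_ (𝟙 X)).hom
  rw [S.flat_comp, ← Category.assoc, cancel_mono, whiskerRight_id,
    whiskerLeft_rightUnitor, cancel_epi] at h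
  exact (Iso.comp_inv_eq_id _).mp ((cancel_epi _).mp (h.symm.trans (Category.comp_id _).symm))

def precompKill {Y X A C : B} (u : Y ⟶ X) {x : X ⟶ A} {f : A ⟶ C} (e : x ≫ f ⟶ S.zro X C) :
    (u ≫ x) ≫ f ⟶ S.zro Y C :=
  (α_ u x f).hom ≫ (u ◁ e) ≫ (S.sharp u).hom

section precompKill

variable {Y X A C : B} {x : X ⟶ A} {f : A ⟶ C}

lemma precompKill_comp {W : B} (t : W ⟶ Y) (u : Y ⟶ X) (e : x ≫ f ⟶ S.zro X C) :
    S.precompKill (t ≫ u) e = ((α_ t u x).hom ▷ f) ≫ S.precompKill t (S.precompKill u e) := by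
  simp only [precompKill, zro, S.sharp_comp]
  bicategory

lemma precompKill_id (e : x ≫ f ⟶ S.zro X C) :
    S.precompKill (𝟙 X) e = ((λ_ x).hom ▷ f) ≫ e := by
  simp only [precompKill, zro, sharp_id]
  bicategory

lemma whiskerRight_whiskerRight_precompKill {u u' : Y ⟶ X} (η : u ⟶ u')
    (e : x ≫ f ⟶ S.zro X C) :
    ((η ▷ x) ▷ f) ≫ S.precompKill u' e = S.precompKill u e := by
  unfold precompKill zro at *
  rw [associator_naturality_left_assoc, ← whisker_exchange_assoc, S.sharp_natural]

lemma whiskerLeft_whiskerRight_precompKill (u : Y ⟶ X) {y : X ⟶ A} (γ : y ⟶ x)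
    (e : x ≫ f ⟶ S.zro X C) :
    ((u ◁ γ) ▷ f) ≫ S.precompKill u e = S.precompKill u ((γ ▷ f) ≫ e) := by
  unfold precompKill zro at *
  rw [associator_naturality_middle_assoc, whiskerLeft_comp_assoc]

end precompKill

lemma precompKill_comp_of_eq {W Y X A C : B} {t : W ⟶ Y} {s : Y ⟶ X} {x : X ⟶ A} {y : Y ⟶ A}
    {v : W ⟶ A} {f : A ⟶ C} {ex : x ≫ f ⟶ S.zro X C} {ey : y ≫ f ⟶ S.zro Y C}
    {ev : v ≫ f ⟶ S.zro W C} {β : s ≫ x ⟶ y} {γ : t ≫ y ⟶ v}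
    (hβ : (β ▷ f) ≫ ey = S.precompKill s ex) (hγ : (γ ▷ f) ≫ ev = S.precompKill t ey) :
    (((α_ t s x).hom ≫ (t ◁ β) ≫ γ) ▷ f) ≫ ev = S.precompKill (t ≫ s) ex := by
  rw [comp_whiskerRight, comp_whiskerRight, Category.assoc, Category.assoc, hγ,
    whiskerLeft_whiskerRight_precompKill, hβ, precompKill_comp]

section RelKernel

variable {A C E Z : B} {f : A ⟶ C} {g : C ⟶ E} {φ : f ≫ g ⟶ S.zro A E} {z : Z ⟶ A}
  {ζ : z ≫ f ⟶ S.zro Z C}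

lemma relKerCompat_precompKill (h : S.RelKerCompat f g φ z ζ) {X : B} (x : X ⟶ Z) :
    S.RelKerCompat f g φ (x ≫ z) (S.precompKill x ζ) := by
  unfold RelKerCompat precompKill zro at *
  calc _ = ((α_ x z f).hom ▷ g) ≫ (α_ x (z ≫ f) g).hom
        ≫ (x ◁ ((α_ z f g).hom ≫ (z ◁ φ) ≫ (S.sharp z).hom)) ≫ (S.sharp x).hom := by
        rw [S.sharp_comp]; bicategory
    _ = ((α_ x z f).hom ▷ g) ≫ (α_ x (z ≫ f) g).hom
        ≫ (x ◁ ((ζ ▷ g) ≫ (S.flat g).hom)) ≫ (S.sharp x).hom := by rw [h]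
    _ = _ := by
        rw [comp_whiskerRight, comp_whiskerRight, Category.assoc, Category.assoc, S.sharp_flat]
        bicategory

variable {S}

lemma IsRelKernel.existsUnique_whiskerRight_eq (hZ : S.IsRelKernel f g φ Z z ζ) {X : B}
    {x₁ x₂ : X ⟶ Z} (β : x₁ ≫ z ⟶ x₂ ≫ z)
    (hβ : (β ▷ f) ≫ S.precompKill x₂ ζ = S.precompKill x₁ ζ) :
    ∃! η : x₁ ⟶ x₂, η ▷ z = β := by
  simpa using hZ.2.2 X (x₂ ≫ z) (S.precompKill x₂ ζ) (S.relKerCompat_precompKill hZ.1 x₂)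
    x₁ x₂ β (𝟙 _) hβ (by rw [id_whiskerRight, Category.id_comp]; rfl)

lemma IsRelKernel.cFaithful (hZ : S.IsRelKernel f g φ Z z ζ) : CFaithful z := by
  intro X x₁ x₂ η θ hηθ
  obtain ⟨_, -, huniq⟩ := hZ.existsUnique_whiskerRight_eq (η ▷ z)
    (S.whiskerRight_whiskerRight_precompKill η ζ)
  exact (huniq η rfl).trans (huniq θ hηθ.symm).symm

lemma IsRelKernel.nonempty_of_whiskerRight (hZ : S.IsRelKernel f g φ Z z ζ) {x : Z ⟶ Z}
    (β : x ≫ z ⟶ z) (hβ : (β ▷ f) ≫ ζ = S.precompKill x ζ) : Nonempty (x ⟶ 𝟙 Z) := by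
  obtain ⟨ξ, -⟩ := hZ.existsUnique_whiskerRight_eq (x₂ := 𝟙 Z) (β ≫ (λ_ z).inv) (by
    rw [precompKill_id, comp_whiskerRight, Category.assoc, ← comp_whiskerRight_assoc]
    simpa using hβ)
  exact ⟨ξ⟩

lemma IsRelKernel.nonempty_retraction (hZ : S.IsRelKernel f g φ Z z ζ) {K : B}
    {k : K ⟶ A} {εk : k ≫ f ⟶ S.zro K C} {w : Z ⟶ K} {u : K ⟶ Z} (ω : w ≫ k ⟶ z)
    (hω : (ω ▷ f) ≫ ζ = S.precompKill w εk) (e : u ≫ w ⟶ 𝟙 K) : Nonempty (w ≫ u ⟶ 𝟙 Z) := by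
  set γ : u ≫ z ⟶ k := (u ◁ S.inv2 ω) ≫ (α_ u w k).inv ≫ (e ▷ k) ≫ (λ_ k).hom
  have hγ : (γ ▷ f) ≫ εk = S.precompKill u ζ := by
    simp only [γ, comp_whiskerRight, Category.assoc]
    rw [← precompKill_id, whiskerRight_whiskerRight_precompKill, precompKill_comp,
      inv_hom_whiskerRight_assoc, ← hω, ← whiskerLeft_whiskerRight_precompKill,
      ← comp_whiskerRight_assoc, ← whiskerLeft_comp,
      inv2_comp, whiskerLeft_id, id_whiskerRight, Category.id_comp]
  exact hZ.nonempty_of_whiskerRight _ (S.precompKill_comp_of_eq hγ hω)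

end RelKernel

/-- `Cok f ≃ 0`, stated through the universal property of the zero cokernel. -/
def CokerTrivial {A K : B} (f : A ⟶ K) : Prop :=
  ∀ ⦃X : B⦄ (x : K ⟶ X) (e : f ≫ x ⟶ S.zro A X),
    ∃ θ : x ⟶ S.zro K X, e = (f ◁ θ) ≫ (S.sharp f).hom

lemma cokerTrivial_of_isCokernel {A K : B} {f : A ⟶ K}
    (hc : S.IsCokernel f S.zObj (S.zro K S.zObj) (S.sharp f).hom) : S.CokerTrivial f := by
  intro X x e
  obtain ⟨t, e', he⟩ := hc.1 X x e
  unfold zro at *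
  refine ⟨S.inv2 e' ≫ (S.flat t).hom, ?_⟩
  have := S.cellIso (f ◁ e')
  rw [← cancel_epi (f ◁ e'), he, ← whiskerLeft_comp_assoc, comp_inv2_assoc, S.sharp_flat,
    Iso.inv_hom_id_assoc]

variable {S} in
lemma CokerTrivial.of_comp {A Z K : B} {k : A ⟶ Z} {w : Z ⟶ K} {u : K ⟶ Z}
    (hkw : S.CokerTrivial (k ≫ w)) (ξ : w ≫ u ⟶ 𝟙 Z) : S.CokerTrivial k := by
  intro X x e
  set ρ : w ≫ u ≫ x ⟶ x := (α_ w u x).inv ≫ (ξ ▷ x) ≫ (λ_ x).hom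
  obtain ⟨θ, hθ⟩ := hkw (u ≫ x) ((α_ k w (u ≫ x)).hom ≫ (k ◁ ρ) ≫ e)
  unfold zro at *
  have key : (k ◁ ρ) ≫ e = (k ◁ w ◁ θ) ≫ (k ◁ (S.sharp w).hom) ≫ (S.sharp k).hom := by
    rw [← cancel_epi (α_ k w (u ≫ x)).hom, hθ, S.sharp_comp, comp_whiskerLeft]
    simp only [Category.assoc, Iso.inv_hom_id_assoc]
  refine ⟨S.inv2 ρ ≫ (w ◁ θ) ≫ (S.sharp w).hom, ?_⟩
  rw [whiskerLeft_comp, whiskerLeft_comp, Category.assoc, Category.assoc, ← key,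
    ← whiskerLeft_comp_assoc, inv2_comp, whiskerLeft_id, Category.id_comp]

variable {S} in
lemma IsRelCokernel.zeroEq {A C Q E : B} {f : A ⟶ C} {g : C ⟶ E} {φ : f ≫ g ⟶ S.zro A E}
    {c : E ⟶ Q} {π : g ≫ c ⟶ S.zro C Q} (hH : S.IsRelCokernel f g φ Q c π)
    (hg : S.CokerTrivial g) : S.ZeroEq Q := by
  obtain ⟨θ, hθ⟩ := hg c π
  unfold zro at *
  have hF : (g ◁ ((S.sharp c).hom ≫ S.inv2 θ)) ≫ π = (α_ g c (munit (S.monStr Q Q))).inv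
      ≫ (π ▷ munit (S.monStr Q Q)) ≫ (S.flat (A := C) (munit (S.monStr Q Q))).hom := by
    rw [S.flat_zero, ← S.sharp_zero, S.sharp_natural π, S.sharp_comp, Iso.inv_hom_id_assoc, hθ,
      ← whiskerLeft_comp_assoc, Category.assoc, inv2_comp, Category.comp_id]
  obtain ⟨η, -⟩ := hH.2.2 Q c π hH.1 (𝟙 Q) _ (ρ_ c).hom ((S.sharp c).hom ≫ S.inv2 θ)
    (by rw [flat_id]; bicategory) hF
  have := S.cellIso η
  exact ⟨S.zro Q S.zObj, S.zro S.zObj Q, ⟨eqToIso (S.zero_comp _ _ _) ≪≫ (asIso η).symm⟩,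
    ⟨eqToIso ((S.zero_comp _ _ _).trans (S.homZZ _).symm)⟩⟩

lemma exists_section_of_cFaithful (hS : IsRelExact S) {A Z K : B} {k : A ⟶ Z} {w : Z ⟶ K}
    (hw : CFaithful w) (hkw : S.CokerTrivial (k ≫ w)) :
    ∃ u : K ⟶ Z, Nonempty (u ≫ w ⟶ 𝟙 K) := by
  obtain ⟨V, cv, πv, hV⟩ := hS.hasCok w
  obtain ⟨θv, -⟩ := hkw cv (S.precompKill k πv)
  obtain ⟨u, e_u, -⟩ := ((hS.faithful_iff w V cv πv hV).mp hw).1 K (𝟙 K) ((λ_ cv).hom ≫ θv)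
  exact ⟨u, ⟨e_u⟩⟩

end LocSCG

theorem stmt19_general {B : Type u} [Bicategory.{w, v} B]
    (S : LocSCG B) (hS : IsRelExact S)
    (A : Cpx S) (m : ℤ)
    (h : S.TwoExact (A.d (m + 1)) (A.d (m + 1 + 1)) (A.δ (m + 1))) :
    S.RelTwoExactWindow (A.d m) (A.d (m + 1)) (A.d (m + 1 + 1)) (A.d (m + 1 + 1 + 1))
      (A.δ m) (A.δ (m + 1)) (A.δ (m + 1 + 1)) := by
  intro Z z ζ hZ k ν₁ _ hν₁ _ H c π hH
  obtain ⟨K, kK, εK, hK⟩ := hS.hasKer (A.d (m + 1 + 1))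
  obtain ⟨w, ω, hω⟩ := hK.1 Z z ζ
  have hw : CFaithful w := (S.cFaithful_of_twoCell ω hZ.cFaithful).of_comp
  have hkw : S.CokerTrivial (k ≫ w) :=
    S.cokerTrivial_of_isCokernel (h K kK εK hK (k ≫ w) _ (S.precompKill_comp_of_eq hω hν₁))
  obtain ⟨u, ⟨e⟩⟩ := S.exists_section_of_cFaithful hS hw hkw
  obtain ⟨ξ⟩ := hZ.nonempty_retraction ω hω e
  exact hH.zeroEq (hkw.of_comp ξ)

/-- 2-exactness of the three-term diagram at a 0-cell of a complex
implies relative 2-exactness of the complex there. -/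
theorem stmt19 {B : Type u} [Bicategory.{w, v} B] [Bicategory.Strict B]
    (S : LocSCG B) (hS : IsRelExact S)
    (A : Cpx S) (m : ℤ)
    (h : S.TwoExact (A.d (m + 1)) (A.d (m + 1 + 1)) (A.δ (m + 1))) :
    S.RelTwoExactWindow (A.d m) (A.d (m + 1)) (A.d (m + 1 + 1)) (A.d (m + 1 + 1 + 1))
      (A.δ m) (A.δ (m + 1)) (A.δ (m + 1 + 1)) :=
  stmt19_general S hS A m h
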